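/- Let T₁, T₂ be compact operators with n(λ, T₁) ≤ C₁λ^{-2σ₁} and n(λ, T₂) ≤ C₂λ^{-2σ₂} for all λ > 0, where σ₁, σ₂ > 0. Then, with σ = σ₁σ₂/(σ₁+σ₂), n(λ, T₁T₂*) ≤ 2·C₁^{σ₂/(σ₁+σ₂)}·C₂^{σ₁/(σ₁+σ₂)}·λ^{-2σ} for all λ > 0. -/

import Mathlib

open scoped ENNReal

/-- The `k`-th singular value (approximation number) of a continuous linear map. -/
noncomputable def sNum {E F : Type*} [NormedAddCommGroup E] [NormedSpace ℂ E]
    [NormedAddCommGroup F] [NormedSpace ℂ F] (T : E →L[ℂ] F) (k : ℕ) : ℝ :=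
  sInf {c : ℝ | ∃ G : E →L[ℂ] F,
    Module.rank ℂ (LinearMap.range (G : E →ₗ[ℂ] F)) ≤ (k : Cardinal) ∧ ‖T - G‖ ≤ c}

/-- The (extended-real valued) singular value counting function `n(λ, T)`. -/
noncomputable def nCountE {E F : Type*} [NormedAddCommGroup E] [NormedSpace ℂ E]
    [NormedAddCommGroup F] [NormedSpace ℂ F] (T : E →L[ℂ] F) (lam : ℝ) : ℝ≥0∞ :=
  ∑' _ : {k : ℕ // lam < sNum T k}, 1

section Aux

variable {E F : Type*} [NormedAddCommGroup E] [NormedSpace ℂ E]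
    [NormedAddCommGroup F] [NormedSpace ℂ F] (T : E →L[ℂ] F)

lemma sNum_bddBelow (k : ℕ) : BddBelow {c : ℝ | ∃ G : E →L[ℂ] F,
    Module.rank ℂ (LinearMap.range (G : E →ₗ[ℂ] F)) ≤ (k : Cardinal) ∧ ‖T - G‖ ≤ c} :=
  ⟨0, fun c hc => by obtain ⟨G, -, hG⟩ := hc; exact le_trans (norm_nonneg _) hG⟩

lemma sNum_set_nonempty (k : ℕ) : Set.Nonempty {c : ℝ | ∃ G : E →L[ℂ] F,
    Module.rank ℂ (LinearMap.range (G : E →ₗ[ℂ] F)) ≤ (k : Cardinal) ∧ ‖T - G‖ ≤ c} :=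
  ⟨‖T‖, 0, by simp, by simp⟩

lemma sNum_le {k : ℕ} (G : E →L[ℂ] F)
    (hG : Module.rank ℂ (LinearMap.range (G : E →ₗ[ℂ] F)) ≤ (k : Cardinal)) :
    sNum T k ≤ ‖T - G‖ :=
  csInf_le (sNum_bddBelow T k) ⟨G, hG, le_rfl⟩

lemma sNum_antitone : Antitone (sNum T) := by
  intro j k hjk
  apply le_csInf (sNum_set_nonempty T j)
  rintro c ⟨G, hG, hc⟩
  exact csInf_le (sNum_bddBelow T k) ⟨G, hG.trans (by exact_mod_cast Nat.cast_le.2 hjk), hc⟩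

lemma sNum_exists_approx (k : ℕ) {ε : ℝ} (hε : 0 < ε) :
    ∃ G : E →L[ℂ] F, Module.rank ℂ (LinearMap.range (G : E →ₗ[ℂ] F)) ≤ (k : Cardinal) ∧
      ‖T - G‖ ≤ sNum T k + ε := by
  obtain ⟨c, hc, hlt⟩ := exists_lt_of_csInf_lt (sNum_set_nonempty T k)
    (lt_add_of_pos_right (sNum T k) hε)
  obtain ⟨G, hG, hc'⟩ := hc
  exact ⟨G, hG, hc'.trans hlt.le⟩

lemma nCountE_le_of_sNum_le {lam : ℝ} {m : ℕ} (h : sNum T m ≤ lam) :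
    nCountE T lam ≤ m := by
  have hsub : ∀ k : ℕ, lam < sNum T k → k < m := by
    intro k hk
    by_contra hkm
    exact absurd ((sNum_antitone T (not_lt.1 hkm)).trans h) (not_le.2 hk)
  have hrw : nCountE T lam = ∑' k : ℕ, Set.indicator {k : ℕ | lam < sNum T k} (1 : ℕ → ℝ≥0∞) k :=
    tsum_subtype {k : ℕ | lam < sNum T k} (1 : ℕ → ℝ≥0∞)
  rw [hrw]
  have : ∀ k ∉ Finset.range m, Set.indicator {k : ℕ | lam < sNum T k} (1 : ℕ → ℝ≥0∞) k = 0 := by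
    intro k hk
    apply Set.indicator_of_notMem
    intro hmem
    exact hk (Finset.mem_range.2 (hsub k hmem))
  rw [tsum_eq_sum this]
  calc ∑ k ∈ Finset.range m, Set.indicator {k : ℕ | lam < sNum T k} (1 : ℕ → ℝ≥0∞) k
      ≤ ∑ _k ∈ Finset.range m, 1 :=
        Finset.sum_le_sum (fun k _ => Set.indicator_le_self _ _ k)
    _ = m := by simp

lemma le_nCountE_of_lt_sNum {lam : ℝ} {m : ℕ} (h : lam < sNum T m) :
    (m + 1 : ℕ) ≤ nCountE T lam := by
  have hrw : nCountE T lam = ∑' k : ℕ, Set.indicator {k : ℕ | lam < sNum T k} (1 : ℕ → ℝ≥0∞) k :=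
    tsum_subtype {k : ℕ | lam < sNum T k} (1 : ℕ → ℝ≥0∞)
  rw [hrw]
  have hsum : ∑ k ∈ Finset.range (m + 1),
      Set.indicator {k : ℕ | lam < sNum T k} (1 : ℕ → ℝ≥0∞) k
      = ∑ _k ∈ Finset.range (m + 1), (1 : ℝ≥0∞) :=
    Finset.sum_congr rfl (fun k hk => Set.indicator_of_mem
      (show k ∈ {k : ℕ | lam < sNum T k} from
        lt_of_lt_of_le h (sNum_antitone T (Nat.lt_succ_iff.1 (Finset.mem_range.1 hk)))) _)
  have : ((m + 1 : ℕ) : ℝ≥0∞) = ∑ k ∈ Finset.range (m + 1),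
      Set.indicator {k : ℕ | lam < sNum T k} (1 : ℕ → ℝ≥0∞) k := by
    rw [hsum]; simp
  rw [this]
  exact ENNReal.sum_le_tsum _

lemma sNum_le_of_nCountE_lt {lam : ℝ} {m : ℕ} (h : nCountE T lam < ((m + 1 : ℕ) : ℝ≥0∞)) :
    sNum T m ≤ lam := by
  by_contra hc
  exact absurd (le_nCountE_of_lt_sNum T (not_le.1 hc)) (not_le.2 h)

end Aux

section Hilbert

variable {H : Type*} [NormedAddCommGroup H] [InnerProductSpace ℂ H] [CompleteSpace H]

set_option synthInstance.maxHeartbeats 1000000 in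
lemma rank_adjoint_le (G : H →L[ℂ] H) {k : ℕ}
    (h : Module.rank ℂ (LinearMap.range (G : H →ₗ[ℂ] H)) ≤ (k : Cardinal)) :
    Module.rank ℂ (LinearMap.range ((ContinuousLinearMap.adjoint G : H →L[ℂ] H) : H →ₗ[ℂ] H))
      ≤ (k : Cardinal) := by
  let V : Submodule ℂ H := LinearMap.range (G : H →ₗ[ℂ] H)
  have hfin : Module.rank ℂ V < Cardinal.aleph0 :=
    lt_of_le_of_lt h (Cardinal.nat_lt_aleph0 k)
  have hfd : FiniteDimensional ℂ V := by
    rw [FiniteDimensional, ← Module.rank_lt_aleph0_iff]; exact hfin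
  have : CompleteSpace V := FiniteDimensional.complete ℂ V
  have hproj : Submodule.HasOrthogonalProjection V := Submodule.HasOrthogonalProjection.ofCompleteSpace V
  have hGeq : G = V.subtypeL ∘L ((V.orthogonalProjectionOnto) ∘L G) := by
    ext x
    exact (Submodule.starProjection_eq_self_iff (K := V).2
      (LinearMap.mem_range_self (G : H →ₗ[ℂ] H) x)).symm
  have hadj : ContinuousLinearMap.adjoint G =
      (ContinuousLinearMap.adjoint ((V.orthogonalProjectionOnto) ∘L G)) ∘L
        (ContinuousLinearMap.adjoint V.subtypeL) := by
    conv_lhs => rw [hGeq]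
    rw [ContinuousLinearMap.adjoint_comp]
  rw [hadj]
  calc Module.rank ℂ (LinearMap.range
        (((ContinuousLinearMap.adjoint ((V.orthogonalProjectionOnto) ∘L G)) ∘L
          (ContinuousLinearMap.adjoint V.subtypeL) : H →L[ℂ] H) : H →ₗ[ℂ] H))
      ≤ Module.rank ℂ (LinearMap.range
        ((ContinuousLinearMap.adjoint V.subtypeL : H →L[ℂ] V) : H →ₗ[ℂ] V)) := by
        rw [ContinuousLinearMap.toLinearMap_comp, LinearMap.range_comp]
        exact rank_map_le _ _
    _ ≤ Module.rank ℂ V := Submodule.rank_le _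
    _ ≤ (k : Cardinal) := h

set_option maxHeartbeats 1000000 in
lemma kyFan_sNum (T₁ T₂ : H →L[ℂ] H) (n₁ n₂ : ℕ) {l₁ l₂ : ℝ}
    (hl₁ : 0 ≤ l₁) (hl₂ : 0 ≤ l₂)
    (h1 : sNum T₁ n₁ ≤ l₁) (h2 : sNum T₂ n₂ ≤ l₂) :
    sNum (T₁ ∘L ContinuousLinearMap.adjoint T₂) (n₁ + n₂) ≤ l₁ * l₂ := by
  apply le_of_forall_pos_le_add
  intro δ hδ
  set ε : ℝ := min 1 (δ / (l₁ + l₂ + 1)) with hε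
  have hεpos : 0 < ε := lt_min one_pos (div_pos hδ (by linarith))
  obtain ⟨G₁, hr₁, hn₁⟩ := sNum_exists_approx T₁ n₁ hεpos
  obtain ⟨G₂, hr₂, hn₂⟩ := sNum_exists_approx T₂ n₂ hεpos
  have hb₁ : ‖T₁ - G₁‖ ≤ l₁ + ε := hn₁.trans (by linarith)
  have hb₂ : ‖T₂ - G₂‖ ≤ l₂ + ε := hn₂.trans (by linarith)
  set A := ContinuousLinearMap.adjoint T₂
  set G : H →L[ℂ] H := G₁ ∘L A + (T₁ - G₁) ∘L ContinuousLinearMap.adjoint G₂ with hG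
  have hkey : T₁ ∘L A - G = (T₁ - G₁) ∘L ContinuousLinearMap.adjoint (T₂ - G₂) := by
    rw [map_sub]
    ext x
    simp [A, G, ContinuousLinearMap.comp_apply, ContinuousLinearMap.sub_apply,
      ContinuousLinearMap.add_apply, map_sub]
    abel
  have hrank : Module.rank ℂ (LinearMap.range (G : H →ₗ[ℂ] H)) ≤ ((n₁ + n₂ : ℕ) : Cardinal) := by
    have hle : LinearMap.range (G : H →ₗ[ℂ] H) ≤
        LinearMap.range ((G₁ ∘L A : H →L[ℂ] H) : H →ₗ[ℂ] H) ⊔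
        LinearMap.range (((T₁ - G₁) ∘L ContinuousLinearMap.adjoint G₂ : H →L[ℂ] H) : H →ₗ[ℂ] H) := by
      rintro x ⟨y, rfl⟩
      exact Submodule.mem_sup.2 ⟨_, LinearMap.mem_range_self _ y, _, LinearMap.mem_range_self _ y,
        rfl⟩
    have h1' : Module.rank ℂ (LinearMap.range ((G₁ ∘L A : H →L[ℂ] H) : H →ₗ[ℂ] H))
        ≤ (n₁ : Cardinal) := by
      rw [ContinuousLinearMap.toLinearMap_comp, LinearMap.range_comp]
      exact (Submodule.rank_mono LinearMap.map_le_range).trans hr₁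
    have h2' : Module.rank ℂ (LinearMap.range
        (((T₁ - G₁) ∘L ContinuousLinearMap.adjoint G₂ : H →L[ℂ] H) : H →ₗ[ℂ] H))
        ≤ (n₂ : Cardinal) := by
      rw [ContinuousLinearMap.toLinearMap_comp, LinearMap.range_comp]
      exact (rank_map_le _ _).trans (rank_adjoint_le G₂ hr₂)
    refine (Submodule.rank_mono hle).trans
      ((Submodule.rank_add_le_rank_add_rank _ _).trans ?_)
    push_cast
    exact add_le_add h1' h2'
  calc sNum (T₁ ∘L A) (n₁ + n₂) ≤ ‖T₁ ∘L A - G‖ := sNum_le _ G hrank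
    _ = ‖(T₁ - G₁) ∘L ContinuousLinearMap.adjoint (T₂ - G₂)‖ := by rw [hkey]
    _ ≤ ‖T₁ - G₁‖ * ‖ContinuousLinearMap.adjoint (T₂ - G₂)‖ := ContinuousLinearMap.opNorm_comp_le _ _
    _ = ‖T₁ - G₁‖ * ‖T₂ - G₂‖ := by rw [ContinuousLinearMap.adjoint.norm_map]
    _ ≤ (l₁ + ε) * (l₂ + ε) := by
        apply mul_le_mul hb₁ hb₂ (norm_nonneg _) (by linarith)
    _ ≤ l₁ * l₂ + δ := by
        have hε1 : ε ≤ 1 := min_le_left _ _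
        have hε2 : ε ≤ δ / (l₁ + l₂ + 1) := min_le_right _ _
        have h3 : ε * (l₁ + l₂ + 1) ≤ δ :=
          (le_div_iff₀ (by linarith : (0:ℝ) < l₁ + l₂ + 1)).1 hε2
        nlinarith

end Hilbert

/-- Combining the Ky Fan inequality with an optimal splitting of `λ = λ₁λ₂`: from
`n(λ, Tᵢ) ≤ Cᵢ λ^{-2σᵢ}` one gets
`n(λ, T₁T₂*) ≤ 2 C₁^{σ₂/(σ₁+σ₂)} C₂^{σ₁/(σ₁+σ₂)} λ^{-2σ}` with
`σ = σ₁σ₂/(σ₁+σ₂)`. -/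
theorem kyFan_product_power_bound {H : Type*} [NormedAddCommGroup H]
    [InnerProductSpace ℂ H] [CompleteSpace H] (T₁ T₂ : H →L[ℂ] H)
    (h₁ : IsCompactOperator T₁) (h₂ : IsCompactOperator T₂)
    (C₁ C₂ σ₁ σ₂ : ℝ) (hC₁ : 0 < C₁) (hC₂ : 0 < C₂) (hσ₁ : 0 < σ₁) (hσ₂ : 0 < σ₂)
    (hb₁ : ∀ lam : ℝ, 0 < lam → nCountE T₁ lam ≤ ENNReal.ofReal (C₁ * lam ^ (-(2 * σ₁))))
    (hb₂ : ∀ lam : ℝ, 0 < lam → nCountE T₂ lam ≤ ENNReal.ofReal (C₂ * lam ^ (-(2 * σ₂)))) :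
    ∀ lam : ℝ, 0 < lam →
      nCountE (T₁ ∘L ContinuousLinearMap.adjoint T₂) lam ≤
        ENNReal.ofReal (2 * C₁ ^ (σ₂ / (σ₁ + σ₂)) * C₂ ^ (σ₁ / (σ₁ + σ₂)) *
          lam ^ (-(2 * (σ₁ * σ₂ / (σ₁ + σ₂))))) := by
  intro lam hlam
  have hs : (0:ℝ) < σ₁ + σ₂ := by linarith
  set s : ℝ := σ₁ + σ₂ with hsdef
  set l₁ : ℝ := Real.exp ((Real.log C₁ - Real.log C₂) / (2 * s) + (σ₂ / s) * Real.log lam)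
    with hl₁def
  set l₂ : ℝ := Real.exp ((Real.log C₂ - Real.log C₁) / (2 * s) + (σ₁ / s) * Real.log lam)
    with hl₂def
  have hl₁ : 0 < l₁ := Real.exp_pos _
  have hl₂ : 0 < l₂ := Real.exp_pos _
  set M : ℝ := C₁ ^ (σ₂ / s) * C₂ ^ (σ₁ / s) * lam ^ (-(2 * (σ₁ * σ₂ / s))) with hMdef
  have hM : 0 < M := by positivity
  have hMexp : M = Real.exp (Real.log C₁ * (σ₂ / s) + Real.log C₂ * (σ₁ / s)
      + Real.log lam * (-(2 * (σ₁ * σ₂ / s)))) := by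
    rw [hMdef, Real.rpow_def_of_pos hC₁, Real.rpow_def_of_pos hC₂, Real.rpow_def_of_pos hlam,
      ← Real.exp_add, ← Real.exp_add]
  have hmul : l₁ * l₂ = lam := by
    rw [hl₁def, hl₂def, ← Real.exp_add]
    have harg : (Real.log C₁ - Real.log C₂) / (2 * s) + (σ₂ / s) * Real.log lam
        + ((Real.log C₂ - Real.log C₁) / (2 * s) + (σ₁ / s) * Real.log lam)
        = Real.log lam := by
      field_simp
      ring
    rw [harg, Real.exp_log hlam]
  have e₁ : C₁ * l₁ ^ (-(2 * σ₁)) = M := by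
    rw [hl₁def, ← Real.exp_mul, hMexp, ← Real.exp_log hC₁, ← Real.exp_add, Real.exp_log hC₁]
    congr 1
    field_simp
    ring
  have e₂ : C₂ * l₂ ^ (-(2 * σ₂)) = M := by
    rw [hl₂def, ← Real.exp_mul, hMexp, ← Real.exp_log hC₂, ← Real.exp_add, Real.exp_log hC₂]
    congr 1
    field_simp
    ring
  set n : ℕ := ⌊M⌋₊ with hn
  have hcast : ∀ m : ℕ, ((m : ℕ) : ℝ≥0∞) = ENNReal.ofReal (m : ℝ) := by
    intro m; rw [ENNReal.ofReal_natCast]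
  have hMlt : M < ((n + 1 : ℕ) : ℝ) := by
    push_cast
    exact Nat.lt_floor_add_one M
  have hcount : ∀ (T : H →L[ℂ] H) (l : ℝ) (C σ : ℝ), 0 < l →
      (nCountE T l ≤ ENNReal.ofReal (C * l ^ (-(2 * σ)))) → C * l ^ (-(2 * σ)) = M →
      sNum T n ≤ l := by
    intro T l C σ hl hcount heq
    apply sNum_le_of_nCountE_lt
    calc nCountE T l ≤ ENNReal.ofReal (C * l ^ (-(2 * σ))) := hcount
      _ = ENNReal.ofReal M := by rw [heq]
      _ < ((n + 1 : ℕ) : ℝ≥0∞) := by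
          rw [hcast (n + 1)]
          exact (ENNReal.ofReal_lt_ofReal_iff (by positivity)).2 hMlt
  have s₁ : sNum T₁ n ≤ l₁ := hcount T₁ l₁ C₁ σ₁ hl₁ (hb₁ l₁ hl₁) e₁
  have s₂ : sNum T₂ n ≤ l₂ := hcount T₂ l₂ C₂ σ₂ hl₂ (hb₂ l₂ hl₂) e₂
  have hKF : sNum (T₁ ∘L ContinuousLinearMap.adjoint T₂) (n + n) ≤ lam := by
    rw [← hmul]
    exact kyFan_sNum T₁ T₂ n n hl₁.le hl₂.le s₁ s₂
  calc nCountE (T₁ ∘L ContinuousLinearMap.adjoint T₂) lam ≤ ((n + n : ℕ) : ℝ≥0∞) :=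
        nCountE_le_of_sNum_le _ hKF
    _ = ENNReal.ofReal ((n + n : ℕ) : ℝ) := hcast _
    _ ≤ ENNReal.ofReal (2 * C₁ ^ (σ₂ / (σ₁ + σ₂)) * C₂ ^ (σ₁ / (σ₁ + σ₂)) *
          lam ^ (-(2 * (σ₁ * σ₂ / (σ₁ + σ₂))))) := by
        apply ENNReal.ofReal_le_ofReal
        have hfl : (n : ℝ) ≤ M := Nat.floor_le hM.le
        have : 2 * C₁ ^ (σ₂ / (σ₁ + σ₂)) * C₂ ^ (σ₁ / (σ₁ + σ₂)) *
            lam ^ (-(2 * (σ₁ * σ₂ / (σ₁ + σ₂)))) = 2 * M := by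
          rw [hMdef, hsdef]; ring
        rw [this]
        push_cast
        linarith
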